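/- arXiv:math/0511718 — 5 statements merged into one kernel-verified Lean document; each statement's English description precedes it below -/
import Mathlib

section
/- Let h be holomorphic and univalent on the open unit disk with h(0) = 0 and h'(0) = 1, and suppose Re( z h'(z) / h(z) ) > 0 for all z ∈ Δ \ {0}. Then for every z ∈ Δ and every t ≥ 0, the point e^{-t} h(z) belongs to h(Δ). -/
/-!
Fix `z` with `h z ≠ 0` and let `S` be the set of `t` with `e^{-t} h z ∈ h(closedBall 0 ‖z‖)`; it is
closed and contains `0`. If `e^{-t₀} h z = h w₀`, lifting the curve `t ↦ e^{-t} h z` through a local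
inverse of `h` near `w₀` gives a curve `w` with `w t₀ = w₀` and `w' = -h(w₀)/h'(w₀)`, so
`d/dt |w|² = -2 |w₀|² Re (w₀ h'(w₀)/h(w₀))⁻¹ < 0`. Hence the lift moves towards `0`, `S` contains a
right neighbourhood of each of its points, and by continuous induction `[0, T] ⊆ S`.
-/

open Complex Set Metric
open Filter Topology ComplexConjugate
open scoped RealInnerProductSpace

theorem HasStrictDerivAt.exists_lift_of_hasDerivAt {h : ℂ → ℂ} {h' w₀ : ℂ}
    (hh : HasStrictDerivAt h h' w₀) (hh' : h' ≠ 0) {f : ℝ → ℂ} {f' : ℂ} {t₀ : ℝ}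
    (hf : HasDerivAt f f' t₀) (hft₀ : f t₀ = h w₀) :
    ∃ w : ℝ → ℂ, w t₀ = w₀ ∧ HasDerivAt w (f' / h') t₀ ∧ ∀ᶠ t in 𝓝 t₀, h (w t) = f t := by
  set g := hh.localInverse h h' w₀ hh'
  refine ⟨g ∘ f, ?_, ?_, ?_⟩
  · simp only [Function.comp_apply, hft₀]
    exact (hh.hasStrictFDerivAt_equiv hh').localInverse_apply_image
  · have hg : HasDerivAt g h'⁻¹ (f t₀) := hft₀ ▸ (hh.to_localInverse hh').hasDerivAt
    simpa [div_eq_mul_inv] using hg.scomp t₀ hf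
  · exact hf.continuousAt.eventually
      (hft₀ ▸ (hh.hasStrictFDerivAt_equiv hh').eventually_right_inverse)

theorem HasDerivAt.eventually_nhdsGT_lt_of_neg {φ : ℝ → ℝ} {d t₀ : ℝ} (hφ : HasDerivAt φ d t₀)
    (hd : d < 0) : ∀ᶠ t in 𝓝[>] t₀, φ t < φ t₀ := by
  have hslope : ∀ᶠ t in 𝓝[>] t₀, slope φ t₀ t < 0 :=
    ((hasDerivAt_iff_tendsto_slope.1 hφ).mono_left (nhdsGT_le_nhdsNE t₀)).eventually_lt_const hd
  filter_upwards [hslope, self_mem_nhdsWithin] with t hneg (ht : t₀ < t)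
  rw [slope_def_field, div_neg_iff] at hneg
  rcases hneg with ⟨_, hneg⟩ | ⟨hneg, _⟩ <;> linarith

theorem HasDerivAt.eventually_nhdsGT_norm_lt {F : Type*} [NormedAddCommGroup F]
    [InnerProductSpace ℝ F] {w : ℝ → F} {w' : F} {t₀ : ℝ} (hw : HasDerivAt w w' t₀)
    (hneg : ⟪w t₀, w'⟫ < 0) : ∀ᶠ t in 𝓝[>] t₀, ‖w t‖ < ‖w t₀‖ := by
  filter_upwards [hw.norm_sq.eventually_nhdsGT_lt_of_neg (by linarith)] with t ht
  exact (pow_lt_pow_iff_left₀ (norm_nonneg _) (norm_nonneg _) two_ne_zero).1 ht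

theorem Complex.re_neg_div_mul_conj_neg {w a b : ℂ} (hw : w ≠ 0) (hpos : 0 < (w * b / a).re) :
    (-a / b * conj w).re < 0 := by
  have hq : w * b / a ≠ 0 := fun hq ↦ by simp [hq] at hpos
  have ha : a ≠ 0 := by rintro rfl; simp at hq
  have hb : b ≠ 0 := by rintro rfl; simp at hq
  have hrw : -a / b * conj w = -(normSq w : ℂ) * (w * b / a)⁻¹ := by
    rw [normSq_eq_conj_mul_self]
    field_simp
  rw [hrw, ← ofReal_neg, re_ofReal_mul, inv_re]
  exact mul_neg_of_neg_of_pos (neg_neg_of_pos (normSq_pos.2 hw))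
    (div_pos hpos (normSq_pos.2 hq))

theorem eventually_exp_mul_mem_image_ball {h : ℂ → ℂ} {U : Set ℂ} (hU : IsOpen U)
    (hd : DifferentiableOn ℂ h U) (h0 : h 0 = 0)
    (hstar : ∀ z ∈ U, z ≠ 0 → 0 < (z * deriv h z / h z).re) {c w₀ : ℂ} {t₀ : ℝ}
    (hw₀ : w₀ ∈ U) (hc : h w₀ = exp (-(t₀ : ℂ)) * c) (hc0 : c ≠ 0) :
    ∀ᶠ t : ℝ in 𝓝[>] t₀, exp (-(t : ℂ)) * c ∈ h '' ball 0 ‖w₀‖ := by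
  have hhw₀ : h w₀ ≠ 0 := hc ▸ mul_ne_zero (exp_ne_zero _) hc0
  have hw₀0 : w₀ ≠ 0 := by rintro rfl; exact hhw₀ h0
  have hpos := hstar w₀ hw₀ hw₀0
  have hderiv : deriv h w₀ ≠ 0 := fun h' ↦ by simp [h'] at hpos
  have hstrict : HasStrictDerivAt h (deriv h w₀) w₀ :=
    (hd.analyticAt (hU.mem_nhds hw₀)).hasStrictDerivAt
  have hf : HasDerivAt (fun t : ℝ ↦ exp (-(t : ℂ)) * c) (-h w₀) t₀ := by
    simpa [hc] using ((hasDerivAt_id (t₀ : ℂ)).neg.cexp.mul_const c).comp_ofReal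
  obtain ⟨w, hwt₀, hw, hlift⟩ := hstrict.exists_lift_of_hasDerivAt hderiv hf hc.symm
  have hdecr := hw.eventually_nhdsGT_norm_lt <| by
    rw [Complex.inner, hwt₀]; exact re_neg_div_mul_conj_neg hw₀0 hpos
  filter_upwards [hdecr, nhdsWithin_le_nhds hlift] with t hlt hht
  exact ⟨w t, by simpa [hwt₀] using hlt, hht⟩

theorem stmt4_general (h : ℂ → ℂ)
    (hd : DifferentiableOn ℂ h (ball (0 : ℂ) 1))
    (h0 : h 0 = 0)
    (hstar : ∀ z ∈ ball (0 : ℂ) 1, z ≠ 0 → 0 < (z * deriv h z / h z).re) :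
    ∀ z ∈ ball (0 : ℂ) 1, ∀ t : ℝ, 0 ≤ t →
      Complex.exp (-(t : ℂ)) * h z ∈ h '' ball (0 : ℂ) 1 := by
  intro z hz T hT
  rcases eq_or_ne (h z) 0 with hz0 | hz0
  · exact ⟨0, mem_ball_self one_pos, by simp [h0, hz0]⟩
  have hsub : closedBall (0 : ℂ) ‖z‖ ⊆ ball 0 1 := closedBall_subset_ball (by simpa using hz)
  set S := {t : ℝ | exp (-(t : ℂ)) * h z ∈ h '' closedBall 0 ‖z‖}
  have hS : IsClosed S :=
    ((isCompact_closedBall _ _).image_of_continuousOn (hd.continuousOn.mono hsub)).isClosed.preimage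
      (by fun_prop)
  have hstep : ∀ t ∈ S, S ∈ 𝓝[>] t := by
    rintro t ⟨w₀, hw₀, hw₀t⟩
    filter_upwards [eventually_exp_mul_mem_image_ball isOpen_ball hd h0 hstar (hsub hw₀) hw₀t hz0]
      with s hs
    exact image_mono (ball_subset_closedBall.trans
      (closedBall_subset_closedBall (by simpa using hw₀))) hs
  obtain ⟨w, hw, hwT⟩ := (hS.inter isClosed_Icc).Icc_subset_of_forall_mem_nhdsWithin
    (show (0 : ℝ) ∈ S from ⟨z, by simp, by simp⟩) (fun t ht ↦ hstep t ht.1) ⟨hT, le_rfl⟩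
  exact ⟨w, hsub hw, hwT⟩

theorem stmt4 (h : ℂ → ℂ)
    (hd : DifferentiableOn ℂ h (ball (0 : ℂ) 1))
    (hinj : Set.InjOn h (ball (0 : ℂ) 1))
    (h0 : h 0 = 0) (h1 : deriv h 0 = 1)
    (hstar : ∀ z ∈ ball (0 : ℂ) 1, z ≠ 0 → 0 < (z * deriv h z / h z).re) :
    ∀ z ∈ ball (0 : ℂ) 1, ∀ t : ℝ, 0 ≤ t →
      Complex.exp (-(t : ℂ)) * h z ∈ h '' ball (0 : ℂ) 1 :=
  stmt4_general h hd h0 hstar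
end

section
/- Let σ be a Borel probability measure on the unit circle with σ({η}) = 0 for a fixed η with |η| = 1, and fix k ≥ 1. Then the limit of ∮_{∂Δ} conj(ζ)(z - η)/(1 - z·conj(ζ)) dσ(ζ) as z → η within the nontangential region D_{k,η} = { z ∈ Δ : |z - η| < k(1 - |z|) } is 0. -/
open Complex Set Metric Filter MeasureTheory

/-- Nontangential approach region at a boundary point `η` with opening `k`. -/
def nt (η : ℂ) (k : ℝ) : Set ℂ :=
  {z : ℂ | ‖z‖ < 1 ∧ ‖z - η‖ < k * (1 - ‖z‖)}

lemma one_sub_norm_le_norm_one_sub_mul_conj {ζ : ℂ} (hζ : ‖ζ‖ = 1) (z : ℂ) :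
    1 - ‖z‖ ≤ ‖1 - z * (starRingEnd ℂ) ζ‖ := by
  simpa [Complex.norm_conj, hζ] using norm_sub_norm_le (1 : ℂ) (z * (starRingEnd ℂ) ζ)

lemma one_sub_mul_conj_ne_zero {ζ η : ℂ} (hζ : ‖ζ‖ = 1) (hζη : ζ ≠ η) :
    1 - η * (starRingEnd ℂ) ζ ≠ 0 := by
  have hconj : (starRingEnd ℂ) ζ * ζ = 1 := by
    rw [mul_comm, Complex.mul_conj, Complex.normSq_eq_norm_sq, hζ]
    norm_num
  -- `(1 - η ζ̄) ζ = ζ - η`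
  intro h
  apply hζη
  linear_combination ζ * h + η * hconj

lemma norm_kernel_le_of_mem_nt {η z ζ : ℂ} {k : ℝ} (hk : 0 ≤ k) (hz : z ∈ nt η k)
    (hζ : ‖ζ‖ = 1) :
    ‖(starRingEnd ℂ) ζ * (z - η) / (1 - z * (starRingEnd ℂ) ζ)‖ ≤ k := by
  obtain ⟨hz1, hz2⟩ := hz
  have hden := one_sub_norm_le_norm_one_sub_mul_conj hζ z
  rw [norm_div, norm_mul, Complex.norm_conj, hζ, one_mul,
    div_le_iff₀ (by linarith)]
  calc ‖z - η‖ ≤ k * (1 - ‖z‖) := hz2.le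
    _ ≤ k * ‖1 - z * (starRingEnd ℂ) ζ‖ := mul_le_mul_of_nonneg_left hden hk

lemma tendsto_kernel_nhds_zero {η ζ : ℂ} (hζ : ‖ζ‖ = 1) (hζη : ζ ≠ η) :
    Tendsto (fun z : ℂ => (starRingEnd ℂ) ζ * (z - η) / (1 - z * (starRingEnd ℂ) ζ))
      (nhds η) (nhds 0) := by
  have hc : ContinuousAt
      (fun z : ℂ => (starRingEnd ℂ) ζ * (z - η) / (1 - z * (starRingEnd ℂ) ζ)) η :=
    ContinuousAt.div (by fun_prop) (by fun_prop) (one_sub_mul_conj_ne_zero hζ hζη)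
  simpa using hc.tendsto

theorem stmt12_general (σ : Measure ℂ) [IsProbabilityMeasure σ]
    (η : ℂ)
    (hcirc : ∀ᵐ ζ ∂σ, ‖ζ‖ = 1)
    (hση : σ {η} = 0) (k : ℝ) (hk : 1 ≤ k) :
    Tendsto (fun z : ℂ =>
        ∫ ζ, (starRingEnd ℂ) ζ * (z - η) / (1 - z * (starRingEnd ℂ) ζ) ∂σ)
      (nhdsWithin η (nt η k)) (nhds 0) := by
  have hne : ∀ᵐ ζ ∂σ, ζ ≠ η := measure_eq_zero_iff_ae_notMem.mp hση
  have hmeas : ∀ z : ℂ, AEStronglyMeasurable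
      (fun ζ : ℂ => (starRingEnd ℂ) ζ * (z - η) / (1 - z * (starRingEnd ℂ) ζ)) σ := by
    intro z
    have hconj : Measurable (starRingEnd ℂ) := Complex.continuous_conj.measurable
    exact ((hconj.mul_const _).div (measurable_const.sub (hconj.const_mul z))).aestronglyMeasurable
  simpa using tendsto_integral_filter_of_dominated_convergence (fun _ => k)
    (Eventually.of_forall hmeas)
    (eventually_nhdsWithin_of_forall fun z hz => hcirc.mono fun ζ hζ =>
      norm_kernel_le_of_mem_nt (by linarith) hz hζ)
    (integrable_const k)
    ((hcirc.and hne).mono fun ζ ⟨hζ, hζη⟩ =>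
      (tendsto_kernel_nhds_zero hζ hζη).mono_left nhdsWithin_le_nhds)

theorem stmt12 (σ : Measure ℂ) [IsProbabilityMeasure σ]
    (η : ℂ) (hη : ‖η‖ = 1)
    (hcirc : ∀ᵐ ζ ∂σ, ‖ζ‖ = 1)
    (hση : σ {η} = 0) (k : ℝ) (hk : 1 ≤ k) :
    Tendsto (fun z : ℂ =>
        ∫ ζ, (starRingEnd ℂ) ζ * (z - η) / (1 - z * (starRingEnd ℂ) ζ) ∂σ)
      (nhdsWithin η (nt η k)) (nhds 0) :=
  stmt12_general σ η hcirc hση k hk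
end

section
/- Let τ ∈ closure(Δ), η on the unit circle with η ≠ τ, a ∈ (0,1], C ≠ 0, and let σ be a probability measure on the unit circle with σ({η}) = 0. Define h(z) = C(z-τ)(1 - z·conj(τ))(1 - z·conj(η))^{-2a} · exp( -2(1-a) ∮ log(1 - z·conj(ζ)) dσ(ζ) ). Then the angular limit ∠lim_{z→η} (z-η) h'(z)/h(z) exists and equals -2a. -/
open Complex Set Metric Filter MeasureTheory

/-- Angular (nontangential) limit of `g` at the boundary point `η`. -/
def AngLim (g : ℂ → ℂ) (η L : ℂ) : Prop :=
  ∀ k : ℝ, 1 ≤ k → Tendsto g (nhdsWithin η (nt η k)) (nhds L)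

/-!
On the disk `h` is the product of `C (z - τ)`, `1 - z τ̄`, `(1 - z η̄)^(-2a)` and `exp(-2(1-a) F)`
with `F z = ∮ log (1 - z ζ̄) dσ(ζ)`, so `(z - η) h'/h` is the sum of the logarithmic derivatives of
the factors times `z - η`. Because `|η| = 1`, the factor `(1 - z η̄)^(-2a)` contributes exactly
`-2a`; the first two contribute terms vanishing at `η ≠ τ`. The last one is
`-2(1-a) ∮ (z - η)(-ζ̄)/(1 - z ζ̄) dσ(ζ)`: in the nontangential region of opening `k` the integrand
is bounded by `k`, since `|1 - z ζ̄| ≥ 1 - |z|`, and it tends to `0` for `ζ ≠ η`, so the integral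
tends to `0` by dominated convergence because `σ {η} = 0`.
-/

open ComplexConjugate Topology

lemma one_sub_norm_le_norm_one_sub_mul (z : ℂ) {w : ℂ} (hw : ‖w‖ ≤ 1) :
    1 - ‖z‖ ≤ ‖1 - z * w‖ := by
  have := norm_sub_norm_le (1 : ℂ) (z * w)
  rw [norm_one, norm_mul] at this
  nlinarith [norm_nonneg z]

lemma one_sub_mul_mem_slitPlane {z w : ℂ} (hz : ‖z‖ < 1) (hw : ‖w‖ ≤ 1) :
    1 - z * w ∈ slitPlane := by
  have : (z * w).re < 1 :=
    calc (z * w).re ≤ ‖z‖ * ‖w‖ := (re_le_norm _).trans_eq (norm_mul _ _)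
      _ < 1 := by nlinarith [norm_nonneg z, norm_nonneg w]
  exact Or.inl (by simpa using this)

lemma one_sub_mul_conj_ne_zero_s13 {η ζ : ℂ} (hη : ‖η‖ = 1) (hne : ζ ≠ η) :
    1 - η * conj ζ ≠ 0 := by
  intro h
  have hηζ : η * conj ζ = 1 := by linear_combination -h
  have hζ1 : ‖ζ‖ = 1 := by simpa [hη] using congrArg norm hηζ
  have hζζ : ζ * conj ζ = 1 := by simp [mul_conj', hζ1]
  have hζ0 : conj ζ ≠ 0 := by simp [← norm_ne_zero_iff, hζ1]
  exact hne (mul_right_cancel₀ hζ0 (hζζ.trans hηζ.symm))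

lemma norm_sub_mul_div_one_sub_mul_conj_le {η z ζ : ℂ} {k : ℝ} (hz : z ∈ nt η k)
    (hζ : ‖ζ‖ ≤ 1) : ‖(z - η) * (-conj ζ / (1 - z * conj ζ))‖ ≤ k := by
  obtain ⟨hz1, hzη⟩ := hz
  have hd := one_sub_norm_le_norm_one_sub_mul z (w := conj ζ) (by simpa using hζ)
  have hpos : 0 < 1 - ‖z‖ := by linarith
  rw [norm_mul, norm_div, norm_neg, RCLike.norm_conj, mul_div_assoc']
  rw [div_le_iff₀ (hpos.trans_le hd)]
  calc ‖z - η‖ * ‖ζ‖ ≤ ‖z - η‖ := mul_le_of_le_one_right (norm_nonneg _) hζ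
    _ ≤ k * (1 - ‖z‖) := hzη.le
    _ ≤ k * ‖1 - z * conj ζ‖ := by
      have : 0 ≤ k := by nlinarith [norm_nonneg (z - η)]
      gcongr

lemma sub_mul_div_one_sub_mul_conj {η z : ℂ} (hη : ‖η‖ = 1) (hz : 1 - z * conj η ≠ 0) (c : ℂ) :
    (z - η) * (c * conj η / (1 - z * conj η)) = -c := by
  have hηη : η * conj η = 1 := by simp [mul_conj', hη]
  rw [mul_div_assoc', div_eq_iff hz]
  linear_combination -c * hηη

lemma hasDerivAt_one_sub_mul (w x : ℂ) : HasDerivAt (fun x => 1 - x * w) (-w) x := by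
  simpa using ((hasDerivAt_id x).mul_const w).const_sub 1

section
variable {σ : Measure ℂ} [IsFiniteMeasure σ]

lemma integrable_log_one_sub_mul_conj (hσ : ∀ᵐ ζ ∂σ, ‖ζ‖ ≤ 1) {z : ℂ} (hz : ‖z‖ < 1) :
    Integrable (fun ζ => log (1 - z * conj ζ)) σ := by
  have hcont : ContinuousOn (fun ζ => log (1 - z * conj ζ)) (closedBall 0 1) := fun ζ hζ =>
    ContinuousAt.continuousWithinAt <| (by fun_prop : Continuous fun ζ => 1 - z * conj ζ)
      |>.continuousAt.clog (one_sub_mul_mem_slitPlane hz (by simpa using hζ))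
  obtain ⟨M, hM⟩ := (isCompact_closedBall (0 : ℂ) 1).exists_bound_of_continuousOn hcont
  refine .of_bound (measurable_log.comp (by fun_prop)).aestronglyMeasurable M ?_
  filter_upwards [hσ] with ζ hζ using hM ζ (by simpa using hζ)

lemma hasDerivAt_integral_log_one_sub_mul_conj (hσ : ∀ᵐ ζ ∂σ, ‖ζ‖ ≤ 1) {z : ℂ}
    (hz : ‖z‖ < 1) :
    HasDerivAt (fun z => ∫ ζ, log (1 - z * conj ζ) ∂σ)
      (∫ ζ, -conj ζ / (1 - z * conj ζ) ∂σ) z := by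
  set ε := (1 - ‖z‖) / 2 with hε
  have hε0 : 0 < ε := by linarith
  have hball : ∀ x ∈ ball z ε, ‖x‖ < 1 - ε := fun x hx => by
    have := norm_le_norm_add_norm_sub' x z
    rw [mem_ball, dist_eq] at hx
    linarith
  refine (hasDerivAt_integral_of_dominated_loc_of_deriv_le (ball_mem_nhds z hε0)
    (F := fun x ζ => log (1 - x * conj ζ)) (F' := fun x ζ => -conj ζ / (1 - x * conj ζ))
    (bound := fun _ => ε⁻¹)
    (.of_forall fun x => (measurable_log.comp (by fun_prop)).aestronglyMeasurable)
    (integrable_log_one_sub_mul_conj hσ hz) (by fun_prop : Measurable _).aestronglyMeasurable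
    ?_ (integrable_const _) ?_).2
  · filter_upwards [hσ] with ζ hζ x hx
    have hd := one_sub_norm_le_norm_one_sub_mul x (w := conj ζ) (by simpa using hζ)
    have hx := hball x hx
    rw [norm_div, norm_neg, RCLike.norm_conj, div_le_iff₀ (by linarith), inv_mul_eq_div,
      le_div_iff₀ hε0]
    nlinarith [norm_nonneg ζ]
  · filter_upwards [hσ] with ζ hζ x hx
    have hslit := one_sub_mul_mem_slitPlane ((hball x hx).trans (by linarith))
      (w := conj ζ) (by simpa using hζ)
    exact (hasDerivAt_one_sub_mul (conj ζ) x).clog hslit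

lemma tendsto_sub_mul_integral_div_one_sub_mul_conj (hσ : ∀ᵐ ζ ∂σ, ‖ζ‖ ≤ 1) {η : ℂ}
    (hη : ‖η‖ = 1) (hση : σ {η} = 0) (k : ℝ) :
    Tendsto (fun z => (z - η) * ∫ ζ, -conj ζ / (1 - z * conj ζ) ∂σ) (𝓝[nt η k] η) (𝓝 0) := by
  simp_rw [← integral_const_mul]
  have hζη : ∀ᵐ ζ ∂σ, ζ ≠ η := by simpa [ae_iff] using hση
  rw [← integral_zero ℂ ℂ (μ := σ)]
  refine tendsto_integral_filter_of_dominated_convergence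
    (F := fun z ζ => (z - η) * (-conj ζ / (1 - z * conj ζ))) (fun _ => k)
    (.of_forall fun z => (by fun_prop : Measurable _).aestronglyMeasurable)
    (eventually_nhdsWithin_of_forall fun z hz => by
      filter_upwards [hσ] with ζ hζ using norm_sub_mul_div_one_sub_mul_conj_le hz hζ)
    (integrable_const k) <| by
      filter_upwards [hζη] with ζ hne
      have hcont : ContinuousAt (fun z => (z - η) * (-conj ζ / (1 - z * conj ζ))) η := by
        have := one_sub_mul_conj_ne_zero_s13 hη hne
        fun_prop (disch := assumption)
      simpa using hcont.tendsto.mono_left nhdsWithin_le_nhds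

lemma logDeriv_mul_cpow_mul_cexp_integral_log (hσ : ∀ᵐ ζ ∂σ, ‖ζ‖ ≤ 1) {τ η C c b z : ℂ}
    (hτ : ‖τ‖ ≤ 1) (hη : ‖η‖ ≤ 1) (hC : C ≠ 0) (hz : ‖z‖ < 1) (hzτ : z ≠ τ) :
    logDeriv (fun z => C * (z - τ) * (1 - z * conj τ) * (1 - z * conj η) ^ c *
        exp (b * ∫ ζ, log (1 - z * conj ζ) ∂σ)) z =
      1 / (z - τ) - conj τ / (1 - z * conj τ) - c * conj η / (1 - z * conj η) +
        b * ∫ ζ, -conj ζ / (1 - z * conj ζ) ∂σ := by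
  have hτ' := one_sub_mul_mem_slitPlane hz (w := conj τ) (by simpa using hτ)
  have hη' := one_sub_mul_mem_slitPlane hz (w := conj η) (by simpa using hη)
  have hd := (((((hasDerivAt_id' z).sub_const τ).const_mul C).fun_mul
    (hasDerivAt_one_sub_mul (conj τ) z)).fun_mul
      ((hasDerivAt_one_sub_mul (conj η) z).cpow_const (c := c) hη')).fun_mul
    ((hasDerivAt_integral_log_one_sub_mul_conj hσ hz).const_mul b).cexp
  rw [logDeriv_apply, hd.deriv, cpow_sub _ _ (slitPlane_ne_zero hη'), cpow_one]
  have := sub_ne_zero.2 hzτ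
  have := slitPlane_ne_zero hτ'
  have := slitPlane_ne_zero hη'
  have : (1 - z * conj η) ^ c ≠ 0 := cpow_ne_zero_iff.2 (.inl (slitPlane_ne_zero hη'))
  field_simp
  ring

end

theorem stmt13_general (τ η : ℂ) (hτ : τ ∈ closure (ball (0 : ℂ) 1))
    (hη : ‖η‖ = 1) (hne : η ≠ τ)
    (a : ℝ) (C : ℂ) (hC : C ≠ 0)
    (σ : Measure ℂ) [IsProbabilityMeasure σ]
    (hcirc : ∀ᵐ ζ ∂σ, ‖ζ‖ = 1) (hση : σ {η} = 0)
    (h : ℂ → ℂ)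
    (hh : ∀ z, h z = C * (z - τ) * (1 - z * (starRingEnd ℂ) τ) *
        (1 - z * (starRingEnd ℂ) η) ^ (((-2 * a : ℝ) : ℂ)) *
        Complex.exp (-2 * (1 - (a : ℂ)) *
          ∫ ζ, Complex.log (1 - z * (starRingEnd ℂ) ζ) ∂σ)) :
    AngLim (fun z => (z - η) * deriv h z / h z) η ((-2 * a : ℝ) : ℂ) := by
  intro k _
  have hτ1 : ‖τ‖ ≤ 1 := by simpa [closure_ball] using hτ
  have hσ : ∀ᵐ ζ ∂σ, ‖ζ‖ ≤ 1 := hcirc.mono fun ζ hζ => hζ.le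
  have hητ : 1 - η * conj τ ≠ 0 := one_sub_mul_conj_ne_zero_s13 hη hne.symm
  have hregular :
      ContinuousAt (fun z => (z - η) / (z - τ) - (z - η) * conj τ / (1 - z * conj τ)) η := by
    have := sub_ne_zero.2 hne
    fun_prop (disch := assumption)
  have hlim := ((hregular.tendsto.mono_left nhdsWithin_le_nhds).add_const ((-2 * a : ℝ) : ℂ)).add
    ((tendsto_sub_mul_integral_div_one_sub_mul_conj hσ hη hση k).const_mul (-2 * (1 - (a : ℂ))))
  simp only [sub_self, zero_div, zero_mul, zero_add, mul_zero, add_zero] at hlim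
  refine hlim.congr' ?_
  filter_upwards [self_mem_nhdsWithin, nhdsWithin_le_nhds (isOpen_ne.mem_nhds hne)] with z hz hzτ
  have hz1 : ‖z‖ < 1 := hz.1
  symm
  rw [mul_div_assoc, ← logDeriv_apply, funext hh,
    logDeriv_mul_cpow_mul_cexp_integral_log hσ hτ1 hη.le hC hz1 hzτ]
  have hzη : 1 - z * conj η ≠ 0 := slitPlane_ne_zero (one_sub_mul_mem_slitPlane hz1 (by simp [hη]))
  rw [mul_add, mul_sub, mul_sub, sub_mul_div_one_sub_mul_conj hη hzη]
  ring

theorem stmt13 (τ η : ℂ) (hτ : τ ∈ closure (ball (0 : ℂ) 1))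
    (hη : ‖η‖ = 1) (hne : η ≠ τ)
    (a : ℝ) (ha0 : 0 < a) (ha1 : a ≤ 1) (C : ℂ) (hC : C ≠ 0)
    (σ : Measure ℂ) [IsProbabilityMeasure σ]
    (hcirc : ∀ᵐ ζ ∂σ, ‖ζ‖ = 1) (hση : σ {η} = 0)
    (h : ℂ → ℂ)
    (hh : ∀ z, h z = C * (z - τ) * (1 - z * (starRingEnd ℂ) τ) *
        (1 - z * (starRingEnd ℂ) η) ^ (((-2 * a : ℝ) : ℂ)) *
        Complex.exp (-2 * (1 - (a : ℂ)) *
          ∫ ζ, Complex.log (1 - z * (starRingEnd ℂ) ζ) ∂σ)) :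
    AngLim (fun z => (z - η) * deriv h z / h z) η ((-2 * a : ℝ) : ℂ) :=
  stmt13_general τ η hτ hη hne a C hC σ hcirc hση h hh
end

section
/- Let f be holomorphic on the open unit disk, h holomorphic and injective on Δ with h'(z) f(z) = μ h(z) for all z ∈ Δ and some μ with Re μ > 0, and suppose that for every w ∈ h(Δ) and t ≥ 0 one has e^{-μ t} w ∈ h(Δ). Define F_t(z) = h^{-1}(e^{-μ t} h(z)). Then {F_t}_{t≥0} is a semiflow on Δ: F_0 = id, F_t ∘ F_s = F_{t+s} for t,s ≥ 0, each F_t is holomorphic Δ → Δ, and ∂F_t(z)/∂t + f(F_t(z)) = 0. -/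
/-!
Since `h` is injective and holomorphic, its derivative never vanishes (at a critical point `h`
would locally be an `n`-th power with `n ≥ 2`, hence `n`-to-one), so `h⁻¹` is holomorphic on
`h(Δ)` with derivative `1 / h' ∘ h⁻¹`. Spirallikeness makes `F_t` well defined, the group law of
`t ↦ e^{-μt}` gives the semiflow property, and differentiating `h(F_t z) = e^{-μt} h(z)` in `t`
together with `h' f = μ h` gives `∂F_t/∂t = -f ∘ F_t`.
-/

open Complex Set Metric Function Filter Topology

lemma AnalyticAt.exists_pow_eq {g : ℂ → ℂ} {z₀ : ℂ} (hg : AnalyticAt ℂ g z₀) (hg₀ : g z₀ ≠ 0)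
    {n : ℕ} (hn : n ≠ 0) : ∃ r : ℂ → ℂ, AnalyticAt ℂ r z₀ ∧ r z₀ ≠ 0 ∧ ∀ z, r z ^ n = g z := by
  obtain ⟨c, hc⟩ := IsAlgClosed.exists_pow_nat_eq (g z₀) (Nat.pos_of_ne_zero hn)
  have hc₀ : c ≠ 0 := by rintro rfl; exact hg₀ (by rw [← hc, zero_pow hn])
  refine ⟨fun z => c * (g z / g z₀) ^ (n⁻¹ : ℂ), ?_, ?_, fun z => ?_⟩
  · refine analyticAt_const.mul ((hg.div analyticAt_const hg₀).cpow analyticAt_const ?_)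
    simp [div_self hg₀]
  · simp [div_self hg₀, hc₀]
  · rw [mul_pow, cpow_nat_inv_pow _ hn, hc, mul_div_cancel₀ _ hg₀]

/-- For a primitive `n`-th root of unity `ζ`, `φ` agrees at the `ψ`-preimages of `w` and `ζ w`,
which exist near `z₀` for all small `w` since `ψ` is a local homeomorphism there. -/
lemma not_injOn_of_eventuallyEq_pow {φ ψ : ℂ → ℂ} {z₀ ψ' : ℂ} {n : ℕ} (hn : 2 ≤ n)
    (hψ : HasStrictDerivAt ψ ψ' z₀) (hψ' : ψ' ≠ 0) (hψ₀ : ψ z₀ = 0)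
    (hφ : ∀ᶠ z in 𝓝 z₀, φ z = ψ z ^ n) {U : Set ℂ} (hU : U ∈ 𝓝 z₀) : ¬ InjOn φ U := by
  intro hinj
  set ζ : ℂ := exp (2 * Real.pi * I / n)
  have hζ : IsPrimitiveRoot ζ n := isPrimitiveRoot_exp n (by omega)
  set S : Set ℂ := {z ∈ U | φ z = ψ z ^ n}
  have hS : ∀ᶠ w in 𝓝 (0 : ℂ), w ∈ ψ '' S := by
    rw [← hψ₀, ← hψ.map_nhds_eq hψ']
    exact image_mem_map (inter_mem hU hφ)
  have hζS : ∀ᶠ w in 𝓝 (0 : ℂ), ζ * w ∈ ψ '' S :=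
    ((continuous_const_mul ζ).tendsto' 0 0 (mul_zero ζ)).eventually hS
  have hw : ∀ᶠ w in 𝓝[≠] (0 : ℂ), (w ∈ ψ '' S ∧ ζ * w ∈ ψ '' S) ∧ w ≠ 0 :=
    ((hS.and hζS).filter_mono nhdsWithin_le_nhds).and self_mem_nhdsWithin
  obtain ⟨w, ⟨⟨z₁, hz₁, rfl⟩, z₂, hz₂, hζz⟩, hw⟩ := hw.exists
  have hz : z₁ = z₂ := hinj hz₁.1 hz₂.1 <| by
    rw [hz₁.2, hz₂.2, hζz, mul_pow, hζ.pow_eq_one, one_mul]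
  subst hz
  refine hζ.ne_one (by omega) (mul_left_cancel₀ (a := ψ z₁) hw ?_)
  rw [mul_one, mul_comm]
  exact hζz.symm

lemma AnalyticAt.two_le_analyticOrderAt_sub_of_deriv_eq_zero {h : ℂ → ℂ} {z₀ : ℂ}
    (hh : AnalyticAt ℂ h z₀) (hd : deriv h z₀ = 0) : 2 ≤ analyticOrderAt (h · - h z₀) z₀ := by
  rw [← hh.analyticOrderAt_deriv_add_one]
  have : 1 ≤ analyticOrderAt (deriv h) z₀ :=
    Order.one_le_iff_ne_zero.mpr (hh.deriv.analyticOrderAt_ne_zero.mpr hd)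
  simpa [one_add_one_eq_two] using add_le_add_left this 1

lemma AnalyticAt.deriv_ne_zero_of_injOn {h : ℂ → ℂ} {z₀ : ℂ} {U : Set ℂ}
    (hh : AnalyticAt ℂ h z₀) (hU : U ∈ 𝓝 z₀) (hinj : InjOn h U) : deriv h z₀ ≠ 0 := by
  intro hd
  have hφ : AnalyticAt ℂ (h · - h z₀) z₀ := hh.sub analyticAt_const
  have hfin : analyticOrderAt (h · - h z₀) z₀ ≠ ⊤ := by
    rw [Ne, analyticOrderAt_eq_top]
    intro hconst
    have : ∀ᶠ z in 𝓝[≠] z₀, (h z - h z₀ = 0 ∧ z ∈ U) ∧ z ≠ z₀ :=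
      ((hconst.and hU).filter_mono nhdsWithin_le_nhds).and self_mem_nhdsWithin
    obtain ⟨z, ⟨hz, hzU⟩, hz₀⟩ := this.exists
    exact hz₀ (hinj hzU (mem_of_mem_nhds hU) (sub_eq_zero.mp hz))
  obtain ⟨g, hg, hg₀, hφg⟩ := hφ.analyticOrderAt_ne_top.mp hfin
  set n := analyticOrderNatAt (h · - h z₀) z₀
  have hn : 2 ≤ n := by
    have := hh.two_le_analyticOrderAt_sub_of_deriv_eq_zero hd
    rwa [← Nat.cast_analyticOrderNatAt hfin, Nat.ofNat_le_cast] at this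
  obtain ⟨r, hr, hr₀, hrn⟩ := hg.exists_pow_eq hg₀ (n := n) (by omega)
  have hψ : HasStrictDerivAt (fun z => (z - z₀) * r z) (r z₀) z₀ := by
    simpa using
      ((hasStrictDerivAt_id z₀).sub (hasStrictDerivAt_const z₀ z₀)).fun_mul hr.hasStrictDerivAt
  refine not_injOn_of_eventuallyEq_pow (φ := (h · - h z₀)) hn hψ hr₀ (by simp) ?_ hU
    (fun z hz w hw e => hinj hz hw (sub_left_inj.mp e))
  filter_upwards [hφg] with z hz
  rw [hz, smul_eq_mul, mul_pow, hrn]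

lemma hasStrictDerivAt_invFunOn {h : ℂ → ℂ} {z₀ : ℂ} {U : Set ℂ}
    (hh : AnalyticAt ℂ h z₀) (hU : U ∈ 𝓝 z₀) (hinj : InjOn h U) :
    HasStrictDerivAt (invFunOn h U) (deriv h z₀)⁻¹ (h z₀) :=
  hh.hasStrictDerivAt.to_local_left_inverse (hh.deriv_ne_zero_of_injOn hU hinj)
    (eventually_of_mem hU hinj.leftInvOn_invFunOn)

def IsSpirallike (μ : ℂ) (Ω : Set ℂ) : Prop :=
  ∀ w ∈ Ω, ∀ t : ℝ, 0 ≤ t → exp (-(μ * t)) * w ∈ Ω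

noncomputable def spiralFlow (h : ℂ → ℂ) (U : Set ℂ) (μ : ℂ) (t : ℝ) (z : ℂ) : ℂ :=
  invFunOn h U (exp (-(μ * t)) * h z)

section spiralFlow

variable {h : ℂ → ℂ} {U : Set ℂ} {μ : ℂ}

lemma spiralFlow_zero (hinj : InjOn h U) {z : ℂ} (hz : z ∈ U) : spiralFlow h U μ 0 z = z := by
  simpa [spiralFlow] using hinj.leftInvOn_invFunOn hz

variable (hΩ : IsSpirallike μ (h '' U))
include hΩ

lemma mapsTo_spiralFlow {t : ℝ} (ht : 0 ≤ t) : MapsTo (spiralFlow h U μ t) U U := fun _ hz =>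
  invFunOn_mem (hΩ _ (mem_image_of_mem h hz) t ht)

lemma apply_spiralFlow {t : ℝ} (ht : 0 ≤ t) {z : ℂ} (hz : z ∈ U) :
    h (spiralFlow h U μ t z) = exp (-(μ * t)) * h z :=
  invFunOn_eq (hΩ _ (mem_image_of_mem h hz) t ht)

lemma spiralFlow_spiralFlow {t s : ℝ} (hs : 0 ≤ s) {z : ℂ} (hz : z ∈ U) :
    spiralFlow h U μ t (spiralFlow h U μ s z) = spiralFlow h U μ (t + s) z := by
  rw [spiralFlow, apply_spiralFlow hΩ hs hz, ← mul_assoc, ← exp_add, spiralFlow]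
  push_cast
  ring_nf

variable (hU : IsOpen U) (hh : DifferentiableOn ℂ h U) (hinj : InjOn h U)
include hU hh hinj

lemma hasDerivAt_invFunOn_exp_mul {t : ℝ} (ht : 0 ≤ t) {z : ℂ} (hz : z ∈ U) :
    HasDerivAt (invFunOn h U) (deriv h (spiralFlow h U μ t z))⁻¹ (exp (-(μ * t)) * h z) := by
  have hzt := mapsTo_spiralFlow hΩ ht hz
  have := hasStrictDerivAt_invFunOn (hh.analyticAt (hU.mem_nhds hzt)) (hU.mem_nhds hzt) hinj
  rw [apply_spiralFlow hΩ ht hz] at this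
  exact this.hasDerivAt

lemma differentiableOn_spiralFlow {t : ℝ} (ht : 0 ≤ t) :
    DifferentiableOn ℂ (spiralFlow h U μ t) U := fun z hz =>
  ((hasDerivAt_invFunOn_exp_mul hΩ hU hh hinj ht hz).differentiableAt.comp z
    ((hh.differentiableAt (hU.mem_nhds hz)).const_mul _)).differentiableWithinAt

lemma hasDerivAt_spiralFlow {f : ℂ → ℂ} (hode : ∀ z ∈ U, deriv h z * f z = μ * h z)
    {t : ℝ} (ht : 0 ≤ t) {z : ℂ} (hz : z ∈ U) :
    HasDerivAt (fun s : ℝ => spiralFlow h U μ s z) (-f (spiralFlow h U μ t z)) t := by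
  set zt := spiralFlow h U μ t z
  have hzt : zt ∈ U := mapsTo_spiralFlow hΩ ht hz
  have hd : deriv h zt ≠ 0 :=
    (hh.analyticAt (hU.mem_nhds hzt)).deriv_ne_zero_of_injOn (hU.mem_nhds hzt) hinj
  have hexp : HasDerivAt (fun w : ℂ => exp (-(μ * w)) * h z) (exp (-(μ * t)) * -μ * h z) t := by
    simpa using (((hasDerivAt_id (t : ℂ)).const_mul μ).neg.cexp).mul_const (h z)
  have hf : f zt = (deriv h zt)⁻¹ * (μ * (exp (-(μ * t)) * h z)) := by
    rw [← apply_spiralFlow hΩ ht hz, ← hode zt hzt, inv_mul_cancel_left₀ hd]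
  convert ((hasDerivAt_invFunOn_exp_mul hΩ hU hh hinj ht hz).comp (t : ℂ) hexp).comp_ofReal
    using 1
  · rfl
  · rw [hf]
    ring

end spiralFlow

theorem stmt17_general (f h : ℂ → ℂ) (μ : ℂ)
    (hh : DifferentiableOn ℂ h (ball (0 : ℂ) 1))
    (hinj : Set.InjOn h (ball (0 : ℂ) 1))
    (hode : ∀ z ∈ ball (0 : ℂ) 1, deriv h z * f z = μ * h z)
    (hspir : ∀ w ∈ h '' ball (0 : ℂ) 1, ∀ t : ℝ, 0 ≤ t →
      Complex.exp (-(μ * (t : ℂ))) * w ∈ h '' ball (0 : ℂ) 1)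
    (F : ℝ → ℂ → ℂ)
    (hF : ∀ (t : ℝ) (z : ℂ), F t z =
      Function.invFunOn h (ball (0 : ℂ) 1) (Complex.exp (-(μ * (t : ℂ))) * h z)) :
    (∀ z ∈ ball (0 : ℂ) 1, F 0 z = z) ∧
    (∀ t s : ℝ, 0 ≤ t → 0 ≤ s → ∀ z ∈ ball (0 : ℂ) 1, F t (F s z) = F (t + s) z) ∧
    (∀ t : ℝ, 0 ≤ t → Set.MapsTo (F t) (ball (0 : ℂ) 1) (ball (0 : ℂ) 1) ∧
      DifferentiableOn ℂ (F t) (ball (0 : ℂ) 1)) ∧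
    (∀ z ∈ ball (0 : ℂ) 1, ∀ t : ℝ, 0 ≤ t →
      HasDerivWithinAt (fun s : ℝ => F s z) (-(f (F t z))) (Set.Ici (0 : ℝ)) t) := by
  obtain rfl : F = spiralFlow h (ball 0 1) μ := funext₂ hF
  have hΩ : IsSpirallike μ (h '' ball 0 1) := hspir
  refine ⟨fun z hz => spiralFlow_zero hinj hz,
    fun t s _ hs z hz => spiralFlow_spiralFlow hΩ hs hz,
    fun t ht => ⟨mapsTo_spiralFlow hΩ ht, differentiableOn_spiralFlow hΩ isOpen_ball hh hinj ht⟩,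
    fun z hz t ht => (hasDerivAt_spiralFlow hΩ isOpen_ball hh hinj hode ht hz).hasDerivWithinAt⟩

theorem stmt17 (f h : ℂ → ℂ) (μ : ℂ) (hμ : 0 < μ.re)
    (hf : DifferentiableOn ℂ f (ball (0 : ℂ) 1))
    (hh : DifferentiableOn ℂ h (ball (0 : ℂ) 1))
    (hinj : Set.InjOn h (ball (0 : ℂ) 1))
    (hode : ∀ z ∈ ball (0 : ℂ) 1, deriv h z * f z = μ * h z)
    (hspir : ∀ w ∈ h '' ball (0 : ℂ) 1, ∀ t : ℝ, 0 ≤ t →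
      Complex.exp (-(μ * (t : ℂ))) * w ∈ h '' ball (0 : ℂ) 1)
    (F : ℝ → ℂ → ℂ)
    (hF : ∀ (t : ℝ) (z : ℂ), F t z =
      Function.invFunOn h (ball (0 : ℂ) 1) (Complex.exp (-(μ * (t : ℂ))) * h z)) :
    (∀ z ∈ ball (0 : ℂ) 1, F 0 z = z) ∧
    (∀ t s : ℝ, 0 ≤ t → 0 ≤ s → ∀ z ∈ ball (0 : ℂ) 1, F t (F s z) = F (t + s) z) ∧
    (∀ t : ℝ, 0 ≤ t → Set.MapsTo (F t) (ball (0 : ℂ) 1) (ball (0 : ℂ) 1) ∧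
      DifferentiableOn ℂ (F t) (ball (0 : ℂ) 1)) ∧
    (∀ z ∈ ball (0 : ℂ) 1, ∀ t : ℝ, 0 ≤ t →
      HasDerivWithinAt (fun s : ℝ => F s z) (-(f (F t z))) (Set.Ici (0 : ℝ)) t) :=
  stmt17_general f h μ hh hinj hode hspir F hF
end

section
/- Let f(z) = -(1-z)(1+z^2)/(1+z) and F_t(z) = [ (1+z^2)e^{2t} - (1-z)·sqrt( 2(1+z^2)e^{2t} - (1-z)^2 ) ] / [ (1+z^2)e^{2t} - (1-z)^2 ] with a suitable branch of the square root. Then u(t) = F_t(z) solves u'(t) + f(u(t)) = 0 with u(0) = z, for z in the open unit disk and t in a neighborhood of 0. -/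
open Complex Set Metric Filter Topology

/-! Put `c = 1 - z` and let `B t` be the principal square root of
`2 (1 + z²) e^{2t} - c²`. Then `2 (1 + z²) e^{2t} = B² + c²`, which collapses the formula to
the Möbius image `F_t(z) = (B - c) / (B + c)`. Under `u = (B - c) / (B + c)` the equation
`u' = (1 - u)(1 + u²)/(1 + u)` becomes `B B' = B² + c²`, i.e. `(B²)' = 2 (B² + c²)`, which the
exponential satisfies. At `t = 0` we get `B = 1 + z` because `Re (1 + z) > 0`, so `F_0(z) = z`,
and by continuity `B t` stays on the principal branch for `t` near `0`. -/

-- No nondegeneracy hypothesis: when `B = ± c` both sides are divisions by zero or of zero.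
theorem div_eq_div_of_two_mul_eq_sq_add_sq {K : Type*} [Field K] [CharZero K] {A B c : K}
    (h : 2 * A = B ^ 2 + c ^ 2) : (A - c * B) / (A - c ^ 2) = (B - c) / (B + c) := by
  rw [← mul_div_mul_left _ _ (two_ne_zero' K),
    show 2 * (A - c * B) = (B - c) * (B - c) by linear_combination h,
    show 2 * (A - c ^ 2) = (B - c) * (B + c) by linear_combination h]
  rcases eq_or_ne (B - c) 0 with hBc | hBc
  · simp [hBc]
  · exact mul_div_mul_left _ _ hBc

theorem one_sub_mul_one_add_sq_div_one_add_of_eq_div {K : Type*} [Field K] [CharZero K]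
    {u B c : K} (hu : (B - c) / (B + c) = u) (hB : B ≠ 0) (hBc : B + c ≠ 0) :
    (1 - u) * (1 + u ^ 2) / (1 + u) = 2 * c * (B ^ 2 + c ^ 2) / (B * (B + c) ^ 2) := by
  have h1 : 1 - u = 2 * c / (B + c) := by rw [← hu]; field_simp; ring
  have h2 : 1 + u = 2 * B / (B + c) := by rw [← hu]; field_simp; ring
  have h3 : 1 + u ^ 2 = 2 * (B ^ 2 + c ^ 2) / (B + c) ^ 2 := by rw [← hu]; field_simp; ring
  rw [h1, h2, h3]
  field_simp

section Deriv

variable {𝕜 : Type*} [NontriviallyNormedField 𝕜]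

theorem HasDerivAt.div_sub_add_of_mul_deriv_eq {K : Type*} [NontriviallyNormedField K]
    [NormedAlgebra 𝕜 K] [CharZero K] {B : 𝕜 → K} {B' c u : K} {t : 𝕜}
    (hB : HasDerivAt B B' t) (hB0 : B t ≠ 0) (hBc : B t + c ≠ 0)
    (hode : B t * B' = B t ^ 2 + c ^ 2) (hu : (B t - c) / (B t + c) = u) :
    HasDerivAt (fun s => (B s - c) / (B s + c)) ((1 - u) * (1 + u ^ 2) / (1 + u)) t := by
  refine ((hB.sub_const c).div (hB.add_const c) hBc).congr_deriv ?_
  rw [one_sub_mul_one_add_sq_div_one_add_of_eq_div hu hB0 hBc, ← hode]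
  field_simp
  ring

theorem HasDerivAt.cpow_one_div_two [NormedAlgebra 𝕜 ℂ] {C : 𝕜 → ℂ} {C' : ℂ} {t : 𝕜}
    (hC : HasDerivAt C C' t) (hslit : C t ∈ slitPlane) :
    HasDerivAt (fun s => C s ^ (1 / 2 : ℂ)) (C' / (2 * C t ^ (1 / 2 : ℂ))) t := by
  refine ((hasStrictDerivAt_cpow_const hslit).hasDerivAt.comp t hC).congr_deriv ?_
  rw [show (1 / 2 - 1 : ℂ) = -(1 / 2) by norm_num, cpow_neg]
  field_simp

theorem cpow_one_div_two_sq (x : ℂ) : (x ^ (1 / 2 : ℂ)) ^ 2 = x := by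
  simp

theorem HasDerivAt.div_sub_add_cpow_one_div_two [NormedAlgebra 𝕜 ℂ] {C : 𝕜 → ℂ} {c u : ℂ}
    {t : 𝕜} (hC : HasDerivAt C (2 * (C t + c ^ 2)) t) (hslit : C t ∈ slitPlane)
    (hBc : C t ^ (1 / 2 : ℂ) + c ≠ 0) (hu : (C t ^ (1 / 2 : ℂ) - c) / (C t ^ (1 / 2 : ℂ) + c) = u) :
    HasDerivAt (fun s => (C s ^ (1 / 2 : ℂ) - c) / (C s ^ (1 / 2 : ℂ) + c))
      ((1 - u) * (1 + u ^ 2) / (1 + u)) t := by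
  have hB : C t ^ (1 / 2 : ℂ) ≠ 0 := fun h => slitPlane_ne_zero hslit (by
    rw [← cpow_one_div_two_sq (C t), h]; ring)
  refine (hC.cpow_one_div_two hslit).div_sub_add_of_mul_deriv_eq hB hBc ?_ hu
  rw [cpow_one_div_two_sq]
  field_simp

end Deriv

theorem sq_mem_slitPlane_of_re_pos {w : ℂ} (hw : 0 < w.re) : w ^ 2 ∈ slitPlane := by
  rw [mem_slitPlane_iff, sq, mul_re, mul_im]
  rcases eq_or_ne w.im 0 with him | him
  · left; rw [him]; nlinarith
  · right; rw [mul_comm w.im, ← two_mul]; exact mul_ne_zero two_ne_zero (mul_ne_zero hw.ne' him)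

theorem re_one_add_pos_of_mem_ball {z : ℂ} (hz : z ∈ ball (0 : ℂ) 1) : 0 < (1 + z).re := by
  rw [mem_ball_zero_iff] at hz
  have := neg_lt_of_abs_lt ((abs_re_le_norm z).trans_lt hz)
  simp only [add_re, one_re]
  linarith

theorem stmt19 (f : ℂ → ℂ) (hf : ∀ z, f z = -((1 - z) * (1 + z ^ 2)) / (1 + z))
    (F : ℝ → ℂ → ℂ)
    (hF : ∀ (t : ℝ) (z : ℂ), F t z =
      ((1 + z ^ 2) * Complex.exp (2 * (t : ℂ)) -
        (1 - z) * ((2 * (1 + z ^ 2) * Complex.exp (2 * (t : ℂ)) - (1 - z) ^ 2) ^ ((1 : ℂ) / 2))) /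
      ((1 + z ^ 2) * Complex.exp (2 * (t : ℂ)) - (1 - z) ^ 2)) :
    ∀ z ∈ ball (0 : ℂ) 1, F 0 z = z ∧
      ∃ ε > 0, ∀ t : ℝ, |t| < ε →
        HasDerivAt (fun s : ℝ => F s z) (-(f (F t z))) t := by
  intro z hz
  set c := 1 - z
  set C : ℝ → ℂ := fun s => 2 * (1 + z ^ 2) * exp (2 * (s : ℂ)) - c ^ 2 with hC
  have hFC : ∀ s, F s z = (C s ^ (1 / 2 : ℂ) - c) / (C s ^ (1 / 2 : ℂ) + c) := fun s => by
    rw [hF]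
    exact div_eq_div_of_two_mul_eq_sq_add_sq (by rw [cpow_one_div_two_sq]; ring)
  have hC0 : C 0 = (1 + z) ^ 2 := by simp only [hC, ofReal_zero, mul_zero, exp_zero]; ring
  have hslit0 : C 0 ∈ slitPlane := hC0 ▸ sq_mem_slitPlane_of_re_pos (re_one_add_pos_of_mem_ball hz)
  have hB0 : C 0 ^ (1 / 2 : ℂ) = 1 + z := by
    rw [hC0, one_div]; exact sq_cpow_two_inv (re_one_add_pos_of_mem_ball hz)
  refine ⟨by rw [hFC, hB0]; field_simp; ring, ?_⟩
  have hCderiv : ∀ t : ℝ, HasDerivAt C (2 * (C t + c ^ 2)) t := fun t => by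
    refine (((((hasDerivAt_id (t : ℂ)).const_mul 2).cexp.const_mul (2 * (1 + z ^ 2))).sub_const
      (c ^ 2)).comp_ofReal).congr_deriv ?_
    simp only [hC, id]; ring
  have hBcont : ContinuousAt (fun s => C s ^ (1 / 2 : ℂ)) 0 :=
    ((hCderiv 0).cpow_one_div_two hslit0).continuousAt
  have hnear : ∀ᶠ s in 𝓝 (0 : ℝ), C s ∈ slitPlane ∧ C s ^ (1 / 2 : ℂ) + c ≠ 0 :=
    ((hCderiv 0).continuousAt.eventually_mem (isOpen_slitPlane.mem_nhds hslit0)).and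
      ((hBcont.add continuousAt_const).eventually_ne (by
        show C 0 ^ (1 / 2 : ℂ) + c ≠ 0
        rw [hB0, show 1 + z + c = 2 by ring]
        exact two_ne_zero))
  obtain ⟨ε, hε, hball⟩ := Metric.eventually_nhds_iff.1 hnear
  refine ⟨ε, hε, fun t ht => ?_⟩
  obtain ⟨hslit, hBc⟩ := hball (by rwa [Real.dist_eq, sub_zero])
  simp only [hFC, hf, neg_div, neg_neg]
  exact (hCderiv t).div_sub_add_cpow_one_div_two hslit hBc rfl
end
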